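/- arXiv:0704.1716 — 7 statements merged into one kernel-verified Lean document; each statement's English description precedes it below -/
import Mathlib

section
/- Let α ≥ 1 be real and let φ lie in the upper half-plane H. If z belongs to the closed disc D_φ (the closure of ℓ_φ(H)) and Im z ≤ 0, then z^{1/α} (principal branch) also has Im z^{1/α} ≤ 0 and belongs to the closed disc D_{φ^{1/α}} (the closure of ℓ_{φ^{1/α}}(H)). That is, the root map takes the lower part of the disc D_φ into the lower part of the disc D_{φ^{1/α}}. -/
/-!
Write `β = 1 / α`, `z = r e^{-iσ}` and `φ = R e^{iθ}`. A point `z ≠ 0` with `Im z ≤ 0` lies in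
`D_φ` iff `r sin θ + R sin σ ≤ sin (σ + θ)` (with `σ + θ < π`), and the root acts on polar
coordinates by `(r, R, σ, θ) ↦ (r^β, R^β, βσ, βθ)`, so one has to show that this inequality
survives. Put `s = σ + θ`. Since `log sin (βt) - β log sin t - (1 - β) log t` increases on
`(0, π)`, `sin (βt) ≤ sin (βs) (sin t / sin s)^β (t / s)^(1-β)` for `0 ≤ t ≤ s`; applying this to
`t = θ, σ` reduces the claim to the two-term Hölder inequality `x^β u^(1-β) + y^β v^(1-β) ≤ 1`
for `x = r sin θ / sin s`, `y = R sin σ / sin s`, `u = θ / s`, `v = σ / s`.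
-/

/- The upper half-plane H = {z : ℂ | Im z > 0}. -/
def UHP : Set ℂ := {z : ℂ | 0 < z.im}

/-- The Möbius transformation ℓ_φ(t) = tφ/(φ + t − 1), taking the upper
half-plane onto the open disc bounded by the circle through 0, 1 and φ. -/
noncomputable def moeb (φ t : ℂ) : ℂ := t * φ / (φ + t - 1)

/-- The closed disc D_φ: the closure of ℓ_φ(H). -/
def discD (φ : ℂ) : Set ℂ := closure (moeb φ '' UHP)

open Real Set

lemma inv_sub_cot_monotoneOn : MonotoneOn (fun u : ℝ => u⁻¹ - cos u / sin u) (Ioo 0 π) := by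
  have hderiv : ∀ u ∈ Ioo 0 π, HasDerivAt (fun u : ℝ => u⁻¹ - cos u / sin u)
      ((sin u ^ 2)⁻¹ - (u ^ 2)⁻¹) u := by
    intro u hu
    have hsin : sin u ≠ 0 := (sin_pos_of_pos_of_lt_pi hu.1 hu.2).ne'
    refine ((hasDerivAt_inv hu.1.ne').sub
      ((hasDerivAt_cos u).div (hasDerivAt_sin u) hsin)).congr_deriv ?_
    field_simp
    linear_combination sin_sq_add_cos_sq u
  refine monotoneOn_of_deriv_nonneg (convex_Ioo 0 π)
    (fun u hu => (hderiv u hu).continuousAt.continuousWithinAt)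
    (fun u hu => ?_) (fun u hu => ?_) <;> rw [interior_Ioo] at hu
  · exact (hderiv u hu).differentiableAt.differentiableWithinAt
  rw [(hderiv u hu).deriv, sub_nonneg]
  have hsin := sin_pos_of_pos_of_lt_pi hu.1 hu.2
  gcongr
  exact (sin_lt hu.1).le

/-- The derivative is `β` times an increment of `u⁻¹ - cot u` between `β t` and `t`. -/
lemma log_sin_mul_sub_monotoneOn {β : ℝ} (hβ0 : 0 < β) (hβ1 : β ≤ 1) :
    MonotoneOn (fun t => log (sin (β * t)) - β * log (sin t) - (1 - β) * log t) (Ioo 0 π) := by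
  have hβt : ∀ t ∈ Ioo 0 π, β * t ∈ Ioo 0 π ∧ β * t ≤ t := fun t ht =>
    ⟨⟨mul_pos hβ0 ht.1, by nlinarith [ht.1, ht.2]⟩, by nlinarith [ht.1]⟩
  have hderiv : ∀ t ∈ Ioo 0 π, HasDerivAt
      (fun t => log (sin (β * t)) - β * log (sin t) - (1 - β) * log t)
      (β * ((t⁻¹ - cos t / sin t) - ((β * t)⁻¹ - cos (β * t) / sin (β * t)))) t := by
    intro t ht
    have hs : sin t ≠ 0 := (sin_pos_of_pos_of_lt_pi ht.1 ht.2).ne'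
    have hsβ : sin (β * t) ≠ 0 :=
      (sin_pos_of_pos_of_lt_pi (hβt t ht).1.1 (hβt t ht).1.2).ne'
    have hsinβ : HasDerivAt (fun t => sin (β * t)) (cos (β * t) * β) t := by
      simpa [Function.comp_def] using
        (hasDerivAt_sin (β * t)).comp t ((hasDerivAt_id t).const_mul β)
    refine (((hsinβ.log hsβ).sub (((hasDerivAt_sin t).log hs).const_mul β)).sub
      ((hasDerivAt_log ht.1.ne').const_mul (1 - β))).congr_deriv ?_
    field_simp
    ring
  refine monotoneOn_of_deriv_nonneg (convex_Ioo 0 π)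
    (fun t ht => (hderiv t ht).continuousAt.continuousWithinAt)
    (fun t ht => ?_) (fun t ht => ?_) <;> rw [interior_Ioo] at ht
  · exact (hderiv t ht).differentiableAt.differentiableWithinAt
  rw [(hderiv t ht).deriv]
  exact mul_nonneg hβ0.le (sub_nonneg.2 (inv_sub_cot_monotoneOn (hβt t ht).1 ht (hβt t ht).2))

lemma sin_mul_le_of_le {β t s : ℝ} (hβ0 : 0 < β) (hβ1 : β ≤ 1) (ht : 0 ≤ t) (hts : t ≤ s)
    (hs : s < π) : sin (β * t) ≤ sin (β * s) * (sin t / sin s) ^ β * (t / s) ^ (1 - β) := by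
  rcases ht.eq_or_lt with rfl | ht
  · rw [mul_zero, sin_zero, zero_div, zero_rpow hβ0.ne', mul_zero, zero_mul]
  have hs0 : 0 < s := ht.trans_le hts
  have hsin_t : 0 < sin t := sin_pos_of_pos_of_lt_pi ht (by linarith)
  have hsin_s : 0 < sin s := sin_pos_of_pos_of_lt_pi hs0 hs
  have hsin_βt : 0 < sin (β * t) := sin_pos_of_pos_of_lt_pi (by positivity) (by nlinarith)
  have hsin_βs : 0 < sin (β * s) := sin_pos_of_pos_of_lt_pi (by positivity) (by nlinarith)
  have hA : 0 < (sin t / sin s) ^ β := rpow_pos_of_pos (div_pos hsin_t hsin_s) β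
  have hB : 0 < (t / s) ^ (1 - β) := rpow_pos_of_pos (div_pos ht hs0) (1 - β)
  have hmono := log_sin_mul_sub_monotoneOn hβ0 hβ1 ⟨ht, by linarith⟩ ⟨hs0, hs⟩ hts
  dsimp only at hmono
  rw [← log_le_log_iff hsin_βt (by positivity), log_mul (by positivity) hB.ne',
    log_mul hsin_βs.ne' hA.ne', log_rpow (div_pos hsin_t hsin_s), log_rpow (div_pos ht hs0),
    log_div hsin_t.ne' hsin_s.ne', log_div ht.ne' hs0.ne']
  linarith

lemma rpow_mul_rpow_add_rpow_mul_rpow_le_one {β x y u v : ℝ} (hβ0 : 0 ≤ β) (hβ1 : β ≤ 1)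
    (hx : 0 ≤ x) (hy : 0 ≤ y) (hu : 0 ≤ u) (hv : 0 ≤ v) (hxy : x + y ≤ 1) (huv : u + v ≤ 1) :
    x ^ β * u ^ (1 - β) + y ^ β * v ^ (1 - β) ≤ 1 := by
  have hxu := geom_mean_le_arith_mean2_weighted hβ0 (sub_nonneg.2 hβ1) hx hu (add_sub_cancel β 1)
  have hyv := geom_mean_le_arith_mean2_weighted hβ0 (sub_nonneg.2 hβ1) hy hv (add_sub_cancel β 1)
  nlinarith

lemma rpow_mul_sin_add_rpow_mul_sin_le {β σ θ r R : ℝ} (hβ0 : 0 < β) (hβ1 : β ≤ 1)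
    (hσ : 0 ≤ σ) (hθ : 0 ≤ θ) (hsum : σ + θ < π) (hr : 0 ≤ r) (hR : 0 ≤ R)
    (h : r * sin θ + R * sin σ ≤ sin (σ + θ)) :
    r ^ β * sin (β * θ) + R ^ β * sin (β * σ) ≤ sin (β * (σ + θ)) := by
  set s := σ + θ
  rcases (add_nonneg hσ hθ).eq_or_lt with hs0 | hs0
  · obtain ⟨rfl, rfl⟩ : σ = 0 ∧ θ = 0 := ⟨by linarith, by linarith⟩
    simp [s]
  have hsin_s : 0 < sin s := sin_pos_of_pos_of_lt_pi hs0 hsum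
  have bound : ∀ a t, 0 ≤ a → 0 ≤ t → t ≤ s →
      a ^ β * sin (β * t) ≤ sin (β * s) * ((a * sin t / sin s) ^ β * (t / s) ^ (1 - β)) := by
    intro a t ha ht hts
    have hsin_t : 0 ≤ sin t := sin_nonneg_of_nonneg_of_le_pi ht (by linarith)
    calc a ^ β * sin (β * t)
        ≤ a ^ β * (sin (β * s) * (sin t / sin s) ^ β * (t / s) ^ (1 - β)) := by
          gcongr; exact sin_mul_le_of_le hβ0 hβ1 ht hts hsum
      _ = sin (β * s) * ((a * sin t / sin s) ^ β * (t / s) ^ (1 - β)) := by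
          rw [mul_div_assoc, mul_rpow ha (by positivity)]; ring
  have holder := rpow_mul_rpow_add_rpow_mul_rpow_le_one (x := r * sin θ / sin s)
    (y := R * sin σ / sin s) (u := θ / s) (v := σ / s) hβ0.le hβ1
    (div_nonneg (mul_nonneg hr (sin_nonneg_of_nonneg_of_le_pi hθ (by linarith))) hsin_s.le)
    (div_nonneg (mul_nonneg hR (sin_nonneg_of_nonneg_of_le_pi hσ (by linarith))) hsin_s.le)
    (by positivity) (by positivity)
    (by rw [← add_div, div_le_one hsin_s]; exact h)
    (by rw [← add_div, add_comm, div_self hs0.ne'])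
  calc r ^ β * sin (β * θ) + R ^ β * sin (β * σ)
      ≤ sin (β * s) * ((r * sin θ / sin s) ^ β * (θ / s) ^ (1 - β)
        + (R * sin σ / sin s) ^ β * (σ / s) ^ (1 - β)) := by
        linarith [bound r θ hr hθ (by linarith), bound R σ hR hσ (by linarith)]
    _ ≤ sin (β * s) :=
        mul_le_of_le_one_right (sin_nonneg_of_nonneg_of_le_pi (by positivity) (by nlinarith)) holder

open Complex hiding sin cos
open ComplexConjugate

lemma ne_zero_of_mem_UHP {φ : ℂ} (hφ : φ ∈ UHP) : φ ≠ 0 :=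
  fun h => by simp [UHP, h] at hφ

lemma arg_mem_Ioo_of_im_pos {z : ℂ} (hz : 0 < z.im) : arg z ∈ Ioo 0 π :=
  ⟨(arg_nonneg_iff.2 hz.le).lt_of_ne fun h => by
      rw [eq_comm, arg_eq_zero_iff] at h; linarith,
    arg_lt_pi_iff.2 (Or.inr hz.ne')⟩

lemma arg_cpow_ofReal {b : ℝ} (hb0 : 0 ≤ b) (hb1 : b ≤ 1) (z : ℂ) :
    arg (z ^ (b : ℂ)) = b * arg z := by
  rcases eq_or_ne z 0 with rfl | hz
  · rcases eq_or_ne b 0 with rfl | hb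
    · simp
    · simp [zero_cpow (ofReal_ne_zero.2 hb)]
  have him : (Complex.log z * b).im = b * arg z := by simp [log_im, mul_comm]
  have h1 := neg_pi_lt_arg z
  have h2 := arg_le_pi z
  rw [cpow_def_of_ne_zero hz, arg_exp, him, toIocMod_eq_self]
  constructor <;> nlinarith

/-- `D_φ = {z | 0 ≤ discForm φ z}` for `φ ∈ H`, because `v = ℓ_φ(t)` means
`v (1 - φ) = t (v - φ)`, and then `discForm φ v = Im t * |v - φ|²`. -/
noncomputable def discForm (φ z : ℂ) : ℝ := (z * (1 - φ) * conj (z - φ)).im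

/-- The centre of the circle through `0`, `1` and `φ`. -/
noncomputable def discCenter (φ : ℂ) : ℂ := ⟨1 / 2, (normSq φ - φ.re) / (2 * φ.im)⟩

lemma discForm_eq_of_mul_eq {φ v t : ℂ} (h : v * (1 - φ) = t * (v - φ)) :
    discForm φ v = t.im * normSq (v - φ) := by
  rw [discForm, h, mul_assoc, mul_conj]
  simp

lemma discForm_eq_mul_sub_sq {φ : ℂ} (hφ : φ.im ≠ 0) (z : ℂ) :
    discForm φ z = φ.im * (‖discCenter φ‖ ^ 2 - ‖z - discCenter φ‖ ^ 2) := by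
  simp only [discForm, discCenter, ← normSq_eq_norm_sq, normSq_apply, mul_im, mul_re, sub_re,
    sub_im, one_re, one_im, conj_re, conj_im]
  field_simp
  ring

lemma discForm_eq_polar (φ z : ℂ) : discForm φ z =
    ‖z‖ * ‖φ‖ * (sin (arg φ - arg z) - ‖z‖ * sin (arg φ) + ‖φ‖ * sin (arg z)) := by
  have hform : discForm φ z = φ.im * (z.re - ‖z‖ ^ 2) + z.im * (‖φ‖ ^ 2 - φ.re) := by
    simp only [discForm, ← normSq_eq_norm_sq, normSq_apply, mul_im, mul_re, sub_re, sub_im,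
      one_re, one_im, conj_re, conj_im]
    ring
  rw [hform, ← norm_mul_cos_arg z, ← norm_mul_sin_arg z, ← norm_mul_cos_arg φ,
    ← norm_mul_sin_arg φ, Real.sin_sub]
  ring

lemma moeb_image_UHP {φ : ℂ} (hφ : φ ∈ UHP) : moeb φ '' UHP = {z | 0 < discForm φ z} := by
  have hφ0 := ne_zero_of_mem_UHP hφ
  have hφ1 : 1 - φ ≠ 0 := fun h => by simp [UHP, (sub_eq_zero.1 h).symm] at hφ
  ext v
  constructor
  · rintro ⟨t, ht, rfl⟩
    have hden : φ + t - 1 ≠ 0 := fun h => by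
      have : φ.im + t.im = 0 := by simpa using congrArg im h
      linarith [show 0 < φ.im from hφ, show 0 < t.im from ht]
    have hsub : moeb φ t - φ = φ * (1 - φ) / (φ + t - 1) := by
      rw [moeb]; field_simp; ring
    show 0 < discForm φ (moeb φ t)
    rw [discForm_eq_of_mul_eq (t := t) (by rw [hsub, moeb]; field_simp)]
    exact mul_pos ht (normSq_pos.2 (by rw [hsub]; exact div_ne_zero (mul_ne_zero hφ0 hφ1) hden))
  · intro hv
    change 0 < discForm φ v at hv
    have hvφ : v - φ ≠ 0 := fun h => by
      rw [sub_eq_zero.1 h, discForm, sub_self] at hv; simp at hv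
    set t := v * (1 - φ) / (v - φ)
    have hform := discForm_eq_of_mul_eq (φ := φ) (v := v) (t := t) (by simp only [t]; field_simp)
    refine ⟨t, ?_, ?_⟩
    · have := normSq_pos.2 hvφ
      change 0 < t.im
      nlinarith
    · have hden : φ + t - 1 = φ * (1 - φ) / (v - φ) := by simp only [t]; field_simp; ring
      rw [moeb, hden]
      field_simp
      simp only [t]
      field_simp

lemma mem_discD_iff {φ z : ℂ} (hφ : φ ∈ UHP) : z ∈ discD φ ↔ 0 ≤ discForm φ z := by
  have hφ' : 0 < φ.im := hφ
  have hball : {z | 0 < discForm φ z} = Metric.ball (discCenter φ) ‖discCenter φ‖ := by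
    ext z
    simp [discForm_eq_mul_sub_sq hφ'.ne', Complex.dist_eq, mul_pos_iff_of_pos_left hφ',
      pow_lt_pow_iff_left₀ (norm_nonneg _) (norm_nonneg _) two_ne_zero]
  have hcenter : ‖discCenter φ‖ ≠ 0 := fun h => by
    simpa [discCenter] using congrArg re (norm_eq_zero.1 h)
  rw [discD, moeb_image_UHP hφ, hball, closure_ball _ hcenter, Metric.mem_closedBall,
    Complex.dist_eq, discForm_eq_mul_sub_sq hφ'.ne', mul_nonneg_iff_of_pos_left hφ', sub_nonneg,
    pow_le_pow_iff_left₀ (norm_nonneg _) (norm_nonneg _) two_ne_zero]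

lemma mem_discD_iff_polar {φ z : ℂ} (hφ : φ ∈ UHP) (hz : z ≠ 0) :
    z ∈ discD φ ↔ ‖z‖ * sin (arg φ) - ‖φ‖ * sin (arg z) ≤ sin (arg φ - arg z) := by
  have hφ0 := ne_zero_of_mem_UHP hφ
  rw [mem_discD_iff hφ, discForm_eq_polar, mul_nonneg_iff_of_pos_left (by positivity)]
  constructor <;> intro h <;> linarith

lemma arg_nonpos_and_sub_arg_lt_pi_of_mem_discD {φ z : ℂ} (hφ : φ ∈ UHP) (hz : z ∈ discD φ)
    (hz0 : z ≠ 0) (hzim : z.im ≤ 0) : arg z ≤ 0 ∧ arg φ - arg z < π := by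
  have hφ0 := ne_zero_of_mem_UHP hφ
  have hr : 0 < ‖z‖ := norm_pos_iff.2 hz0
  have hR : 0 < ‖φ‖ := norm_pos_iff.2 hφ0
  obtain ⟨hθ0, hθπ⟩ := arg_mem_Ioo_of_im_pos hφ
  have hsinθ := sin_pos_of_pos_of_lt_pi hθ0 hθπ
  have hsinψ : sin (arg z) ≤ 0 := by
    rw [← norm_mul_sin_arg z] at hzim
    exact nonpos_of_mul_nonpos_right hzim hr
  have hpolar := (mem_discD_iff_polar hφ hz0).1 hz
  have hψ : arg z ≤ 0 := by
    by_contra! h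
    have hπ : arg z = π := (arg_le_pi z).antisymm
      (not_lt.1 fun h' => (sin_pos_of_pos_of_lt_pi h h').not_ge hsinψ)
    rw [hπ, Real.sin_pi, Real.sin_sub_pi] at hpolar
    nlinarith
  refine ⟨hψ, ?_⟩
  by_contra! h
  have : sin (arg φ - arg z) ≤ 0 := by
    rw [← neg_neg (sin _), ← Real.sin_sub_pi]
    exact neg_nonpos.2
      (sin_nonneg_of_nonneg_of_le_pi (by linarith) (by linarith [neg_pi_lt_arg z]))
  nlinarith [mul_pos hr hsinθ, mul_nonneg hR.le (neg_nonneg.2 hsinψ)]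

/-- for α ≥ 1 and φ ∈ H, the principal root z ↦ z^{1/α} maps the
lower part of the closed disc D_φ (points with Im z ≤ 0) into the lower part
of the closed disc D_{φ^{1/α}}. -/
theorem root_maps_lower_disc (α : ℝ) (hα : 1 ≤ α) (φ : ℂ) (hφ : φ ∈ UHP) :
    ∀ z ∈ discD φ, z.im ≤ 0 →
      (z ^ (((1 / α : ℝ)) : ℂ)).im ≤ 0 ∧
      z ^ (((1 / α : ℝ)) : ℂ) ∈ discD (φ ^ (((1 / α : ℝ)) : ℂ)) := by
  intro z hz hzim
  have hb0 : 0 < 1 / α := one_div_pos.2 (by linarith)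
  have hb1 : 1 / α ≤ 1 := div_le_one_of_le₀ hα (by linarith)
  have harg := arg_cpow_ofReal hb0.le hb1
  obtain ⟨hθ0, hθπ⟩ := arg_mem_Ioo_of_im_pos hφ
  have hχ : φ ^ ((1 / α : ℝ) : ℂ) ∈ UHP := by
    change 0 < im _
    rw [← norm_mul_sin_arg, harg, norm_cpow_real]
    exact mul_pos (rpow_pos_of_pos (norm_pos_iff.2 (ne_zero_of_mem_UHP hφ)) _)
      (sin_pos_of_pos_of_lt_pi (by positivity) (by nlinarith))
  rcases eq_or_ne z 0 with rfl | hz0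
  · rw [zero_cpow (ofReal_ne_zero.2 hb0.ne')]
    exact ⟨le_rfl, (mem_discD_iff hχ).2 (by simp [discForm])⟩
  obtain ⟨hψ, hsum⟩ := arg_nonpos_and_sub_arg_lt_pi_of_mem_discD hφ hz hz0 hzim
  have hpolar := (mem_discD_iff_polar hφ hz0).1 hz
  refine ⟨?_, (mem_discD_iff_polar hχ (cpow_ne_zero_iff.2 (Or.inl hz0))).2 ?_⟩
  · rw [← norm_mul_sin_arg, harg]
    exact mul_nonpos_of_nonneg_of_nonpos (norm_nonneg _)
      (sin_nonpos_of_nonpos_of_neg_pi_le (by nlinarith) (by nlinarith [neg_pi_lt_arg z]))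
  · have key := rpow_mul_sin_add_rpow_mul_sin_le hb0 hb1 (neg_nonneg.2 hψ) hθ0.le
      (by linarith) (norm_nonneg z) (norm_nonneg φ) (by rw [Real.sin_neg, neg_add_eq_sub]; linarith)
    rw [harg, harg, norm_cpow_real, norm_cpow_real, ← mul_sub]
    rw [mul_neg, Real.sin_neg, neg_add_eq_sub] at key
    linarith
end

section
/- Theorem 1 (existence form): For every real α > 1 there exists a function F in the class P of Pick Argument Lessening functions such that F(z)^{α+1} = F(z) + z − 1 for all z ∈ H ∪ [1, ∞) (principal power; this is the functional equation p₂ = (1 + (p₃ − 1)/p₂)^{1/α}), and F(x) > 1 for every real x > 1. Moreover, on (1, ∞) the function F coincides with the inverse of the strictly increasing map t ↦ t^{α+1} − t + 1 from (1, ∞) onto (1, ∞). -/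
def posRay : Set ℂ := {z : ℂ | z.im = 0 ∧ 1 ≤ z.re}

/-- The class P of Pick Argument Lessening functions. -/
structure IsPal (φ : ℂ → ℂ) : Prop where
  holo : DifferentiableOn ℂ φ UHP
  mapsUHP : ∀ z ∈ UHP, 0 < (φ z).im
  cont : ContinuousOn φ (UHP ∪ posRay)
  realOnRay : ∀ z ∈ posRay, (φ z).im = 0
  fix_one : φ 1 = 1

open Set Filter Topology Real
open Complex (arg slitPlane)

noncomputable section

namespace PalEquation

def realMap (α t : ℝ) : ℝ := t ^ (α + 1) - t + 1

def gMap (α : ℝ) (w : ℂ) : ℂ := w ^ ((α + 1 : ℝ) : ℂ) - w + 1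

def sectorAngle (α : ℝ) : ℝ := π / (α + 1)

def sector (α : ℝ) : Set ℂ :=
  {w | 0 < w.re ∧ 0 < w.im ∧ w.im < w.re * tan (sectorAngle α)}

def closedCone (α : ℝ) : Set ℂ := {w | 0 ≤ w.im ∧ w.im ≤ w.re * tan (sectorAngle α)}

def truncCone (α : ℝ) : Set ℂ := closedCone α ∩ {w | (α + 1)⁻¹ ≤ ‖w‖ ^ α}

lemma isOpen_UHP : IsOpen UHP := isOpen_lt continuous_const Complex.continuous_im

variable {α : ℝ}

section RealMap

lemma realMap_one : realMap α 1 = 1 := by simp [realMap]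

lemma hasDerivAt_realMap {t : ℝ} (ht : 0 < t) :
    HasDerivAt (realMap α) ((α + 1) * t ^ α - 1) t := by
  show HasDerivAt (fun t : ℝ => t ^ (α + 1) - t + 1) _ t
  simpa using ((Real.hasDerivAt_rpow_const (p := α + 1) (Or.inl ht.ne')).sub
    (hasDerivAt_id t)).add_const 1

lemma continuousOn_realMap (hα : 0 < α) : ContinuousOn (realMap α) (Ici 0) := by
  unfold realMap
  exact ((continuous_id.rpow_const fun _ => Or.inr (by linarith)).sub continuous_id
    |>.add continuous_const).continuousOn

lemma realMap_strictMonoOn (hα : 0 < α) : StrictMonoOn (realMap α) (Ici 1) := by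
  refine strictMonoOn_of_deriv_pos (convex_Ici 1)
    ((continuousOn_realMap hα).mono (Ici_subset_Ici.2 zero_le_one)) fun t ht => ?_
  rw [interior_Ici, mem_Ioi] at ht
  rw [(hasDerivAt_realMap (by linarith)).deriv]
  nlinarith [Real.one_le_rpow ht.le hα.le]

lemma realMap_lt_one (hα : 0 < α) {t : ℝ} (h0 : 0 < t) (h1 : t < 1) : realMap α t < 1 := by
  have := Real.rpow_lt_rpow_of_exponent_gt h0 h1 (show 1 < α + 1 by linarith)
  rw [Real.rpow_one] at this
  simp only [realMap]
  linarith

lemma le_realMap_add_one (hα : 1 ≤ α) {x : ℝ} (hx : 1 ≤ x) : x ≤ realMap α (x + 1) := by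
  have : (x + 1) ^ (2 : ℝ) ≤ (x + 1) ^ (α + 1) :=
    Real.rpow_le_rpow_of_exponent_le (by linarith) (by linarith)
  rw [Real.rpow_two] at this
  simp only [realMap]
  nlinarith

lemma realMap_surjOn (hα : 1 ≤ α) : SurjOn (realMap α) (Ici 1) (Ici 1) := by
  intro x (hx : 1 ≤ x)
  have hcont : ContinuousOn (realMap α) (Icc 1 (x + 1)) :=
    (continuousOn_realMap (by linarith)).mono fun t ht => le_trans zero_le_one ht.1
  obtain ⟨t, ht, htx⟩ := intermediate_value_Icc (by linarith) hcont
    ⟨realMap_one.trans_le hx, le_realMap_add_one hα hx⟩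
  exact ⟨t, ht.1, htx⟩

lemma realMap_image_Ioi (hα : 1 ≤ α) : realMap α '' Ioi 1 = Ioi 1 := by
  refine Subset.antisymm ?_ fun x (hx : 1 < x) => ?_
  · rintro _ ⟨t, ht : 1 < t, rfl⟩
    simpa [realMap_one] using
      realMap_strictMonoOn (by linarith) self_mem_Ici (le_of_lt ht) ht
  · obtain ⟨t, ht : 1 ≤ t, rfl⟩ := realMap_surjOn hα (le_of_lt hx)
    refine ⟨t, lt_of_le_of_ne ht ?_, rfl⟩
    rintro rfl
    simp [realMap_one] at hx

end RealMap

section ComplexMap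

lemma gMap_ofReal {t : ℝ} (ht : 0 ≤ t) : gMap α t = realMap α t := by
  simp only [gMap, realMap]
  rw [← Complex.ofReal_cpow ht]
  push_cast
  ring

lemma gMap_of_mem_posRay {w : ℂ} (hw : w ∈ posRay) : gMap α w = realMap α w.re := by
  conv_lhs => rw [← Complex.re_add_im w, hw.1]
  simpa using gMap_ofReal (α := α) (by linarith [hw.2] : 0 ≤ w.re)

lemma im_gMap_eq_zero_of_mem_posRay {w : ℂ} (hw : w ∈ posRay) : (gMap α w).im = 0 := by
  rw [gMap_of_mem_posRay hw, Complex.ofReal_im]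

lemma im_gMap (w : ℂ) : (gMap α w).im = ‖w‖ ^ (α + 1) * sin (arg w * (α + 1)) - w.im := by
  rw [gMap, Complex.add_im, Complex.sub_im, Complex.cpow_ofReal_im, Complex.one_im, add_zero]

lemma hasStrictDerivAt_gMap {w : ℂ} (hw : w ∈ slitPlane) :
    HasStrictDerivAt (gMap α) ((α + 1 : ℝ) * w ^ (α : ℂ) - 1) w := by
  have h := Complex.hasStrictDerivAt_cpow_const (c := ((α + 1 : ℝ) : ℂ)) hw
  rw [show ((α + 1 : ℝ) : ℂ) - 1 = α by push_cast; ring] at h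
  exact (h.sub (hasStrictDerivAt_id w)).add_const 1

lemma norm_le_norm_gMap_add_two (hα : 1 ≤ α) (w : ℂ) : ‖w‖ ≤ ‖gMap α w‖ + 2 := by
  rcases le_or_gt ‖w‖ 1 with h | h
  · linarith [norm_nonneg (gMap α w)]
  have hpow : ‖w‖ ^ (2 : ℝ) ≤ ‖w‖ ^ (α + 1) :=
    Real.rpow_le_rpow_of_exponent_le h.le (by linarith)
  have hnorm : ‖w‖ ^ (α + 1) ≤ ‖gMap α w‖ + ‖w‖ + 1 := by
    rw [← Complex.norm_cpow_real, show w ^ ((α + 1 : ℝ) : ℂ) = gMap α w + w - 1 by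
      simp only [gMap]; ring]
    exact (norm_sub_le _ _).trans (by simp [norm_add_le])
  rw [Real.rpow_two] at hpow
  nlinarith [norm_nonneg (gMap α w)]

end ComplexMap

section Sector

lemma sectorAngle_pos (hα : 0 < α) : 0 < sectorAngle α := div_pos pi_pos (by linarith)

lemma sectorAngle_lt_pi_div_two (hα : 1 < α) : sectorAngle α < π / 2 :=
  div_lt_div_of_pos_left pi_pos two_pos (by linarith)

lemma mul_sectorAngle (hα : 0 < α) : sectorAngle α * (α + 1) = π :=
  div_mul_cancel₀ _ (by linarith)

lemma tan_sectorAngle_pos (hα : 1 < α) : 0 < tan (sectorAngle α) :=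
  tan_pos_of_pos_of_lt_pi_div_two (sectorAngle_pos (by linarith)) (sectorAngle_lt_pi_div_two hα)

lemma arctan_tan_sectorAngle (hα : 1 < α) : arctan (tan (sectorAngle α)) = sectorAngle α :=
  arctan_tan (by linarith [sectorAngle_pos (α := α) (by linarith), pi_pos])
    (sectorAngle_lt_pi_div_two hα)

lemma arg_eq_arctan {w : ℂ} (hw : 0 < w.re) : arg w = arctan (w.im / w.re) := by
  have h := abs_lt.1 (Complex.abs_arg_lt_pi_div_two_iff.2 (Or.inl hw))
  rw [← Complex.tan_arg, arctan_tan h.1 h.2]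

lemma arg_mem_Ioo_of_mem_sector (hα : 1 < α) {w : ℂ} (hw : w ∈ sector α) :
    arg w ∈ Ioo 0 (sectorAngle α) := by
  obtain ⟨hre, him, hlt⟩ := hw
  rw [arg_eq_arctan hre]
  constructor
  · simpa using arctan_strictMono (div_pos him hre)
  · rw [← arctan_tan_sectorAngle hα]
    exact arctan_strictMono ((div_lt_iff₀ hre).2 (by linarith))

lemma isOpen_sector : IsOpen (sector α) :=
  (isOpen_lt continuous_const Complex.continuous_re).inter <|
    (isOpen_lt continuous_const Complex.continuous_im).inter <|
      isOpen_lt Complex.continuous_im (Complex.continuous_re.mul continuous_const)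

lemma isClosed_truncCone (hα : 0 < α) : IsClosed (truncCone α) :=
  ((isClosed_le continuous_const Complex.continuous_im).inter <|
    isClosed_le Complex.continuous_im (Complex.continuous_re.mul continuous_const)).inter <|
      isClosed_le continuous_const (continuous_norm.rpow_const fun _ => Or.inr hα.le)

lemma sector_subset_closedCone : sector α ⊆ closedCone α :=
  fun _ hw => ⟨hw.2.1.le, hw.2.2.le⟩

lemma posRay_subset_closedCone (hα : 1 < α) : posRay ⊆ closedCone α := fun w hw => by
  refine ⟨hw.1.ge, ?_⟩
  rw [hw.1]
  exact mul_nonneg (by linarith [hw.2]) (tan_sectorAngle_pos hα).le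

lemma re_pos_of_mem_closedCone (hα : 1 < α) {w : ℂ} (hw : w ∈ closedCone α) (hw0 : w ≠ 0) :
    0 < w.re := by
  have ht := tan_sectorAngle_pos hα
  by_contra! hre
  have him : w.im = 0 := le_antisymm (hw.2.trans (mul_nonpos_of_nonpos_of_nonneg hre ht.le)) hw.1
  have : w.re = 0 := le_antisymm hre (nonneg_of_mul_nonneg_left (him ▸ hw.2) ht)
  exact hw0 (Complex.ext this him)

lemma add_smul_sub_mem_sector (hα : 1 < α) {w₁ w₂ : ℂ} (h₁ : w₁ ∈ sector α)
    (h₂ : w₂ ∈ closedCone α) {s : ℝ} (hs : s ∈ Ioc 0 1) :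
    w₂ + s • (w₁ - w₂) ∈ sector α := by
  obtain ⟨hre₁, him₁, hlt₁⟩ := h₁
  obtain ⟨him₂, hle₂⟩ := h₂
  have hre₂ : 0 ≤ w₂.re :=
    nonneg_of_mul_nonneg_left (him₂.trans hle₂) (tan_sectorAngle_pos hα)
  obtain ⟨hs0, hs1⟩ := hs
  refine ⟨?_, ?_, ?_⟩ <;>
    simp only [Complex.add_re, Complex.add_im, Complex.real_smul, Complex.re_ofReal_mul,
      Complex.im_ofReal_mul, Complex.sub_re, Complex.sub_im] <;> nlinarith

lemma im_cpow_pos_of_mem_sector (hα : 1 < α) {w : ℂ} (hw : w ∈ sector α) :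
    0 < (w ^ (α : ℂ)).im := by
  obtain ⟨h0, hβ⟩ := arg_mem_Ioo_of_mem_sector hα hw
  rw [Complex.cpow_ofReal_im]
  refine mul_pos (Real.rpow_pos_of_pos (norm_pos_iff.2 fun h => by simp [h] at h0) _)
    (sin_pos_of_pos_of_lt_pi (mul_pos h0 (by linarith)) ?_)
  calc arg w * α < sectorAngle α * (α + 1) := by nlinarith
    _ = π := mul_sectorAngle (by linarith)

end Sector

section Injectivity

lemma eq_of_gMap_eq (hα : 1 < α) {w₁ w₂ : ℂ} (h₁ : w₁ ∈ sector α)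
    (h₂ : w₂ ∈ sector α ∪ posRay) (h : gMap α w₁ = gMap α w₂) : w₁ = w₂ := by
  by_contra hne
  set c : ℂ := ((α + 1 : ℝ) : ℂ)
  set γ : ℝ → ℂ := fun t => w₂ + t • (w₁ - w₂)
  have hsector : ∀ t ∈ Ioc (0 : ℝ) 1, γ t ∈ sector α := fun t ht =>
    add_smul_sub_mem_sector hα h₁
      (h₂.elim (sector_subset_closedCone ·) (posRay_subset_closedCone hα ·)) ht
  have hslit : ∀ t ∈ Icc (0 : ℝ) 1, γ t ∈ slitPlane := by
    rintro t ⟨ht0, ht1⟩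
    refine Complex.mem_slitPlane_iff.2 (Or.inl ?_)
    rcases ht0.eq_or_lt with rfl | ht0
    · simpa [γ] using h₂.elim (·.1) (fun hw => by linarith [hw.2])
    · exact (hsector t ⟨ht0, ht1⟩).1
  have hcont : ContinuousOn (fun t : ℝ => c * γ t ^ (α : ℂ)) (Icc 0 1) := fun t ht =>
    (((continuousAt_cpow_const (hslit t ht)).comp
      (by fun_prop : Continuous γ).continuousAt).const_mul c).continuousWithinAt
  have hftc := intervalIntegral.integral_unitInterval_deriv_eq_sub (f := fun w : ℂ => w ^ c)
    (f' := fun w => c * w ^ (α : ℂ)) hcont fun t ht => by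
      simpa [c, γ] using (Complex.hasStrictDerivAt_cpow_const (c := c) (hslit t ht)).hasDerivAt
  have hint : ∫ t in (0 : ℝ)..1, c * γ t ^ (α : ℂ) = 1 := by
    simp only [smul_eq_mul, add_sub_cancel] at hftc
    refine mul_left_cancel₀ (sub_ne_zero.2 hne) (hftc.trans ?_)
    simp only [gMap] at h
    linear_combination h
  have hpos : 0 < ∫ t in (0 : ℝ)..1, (c * γ t ^ (α : ℂ)).im := by
    refine intervalIntegral.intervalIntegral_pos_of_pos_on
      ((Complex.continuous_im.comp_continuousOn hcont).intervalIntegrable_of_Icc zero_le_one)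
      (fun t ht => ?_) one_pos
    rw [Complex.im_ofReal_mul]
    exact mul_pos (by linarith)
      (im_cpow_pos_of_mem_sector hα (hsector t (Ioo_subset_Ioc_self ht)))
  have him := Complex.imCLM.intervalIntegral_comp_comm
    (hcont.intervalIntegrable_of_Icc (μ := MeasureTheory.volume) zero_le_one)
  simp only [Complex.imCLM_apply, hint, Complex.one_im] at him
  exact hpos.ne' him

lemma gMap_injOn (hα : 1 < α) : InjOn (gMap α) (sector α ∪ posRay) := by
  rintro w₁ (h₁ | h₁) w₂ h₂ h
  · exact eq_of_gMap_eq hα h₁ h₂ h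
  rcases h₂ with h₂ | h₂
  · exact (eq_of_gMap_eq hα h₂ (Or.inr h₁) h.symm).symm
  rw [gMap_of_mem_posRay h₁, gMap_of_mem_posRay h₂, Complex.ofReal_inj] at h
  exact Complex.ext ((realMap_strictMonoOn (by linarith)).injOn h₁.2 h₂.2 h)
    (h₁.1.trans h₂.1.symm)

end Injectivity

section Boundary

lemma sin_mul_le_mul_sin {k θ : ℝ} (hk : 1 ≤ k) (hθ : 0 ≤ θ) (hkθ : k * θ ≤ π) :
    sin (k * θ) ≤ k * sin θ := by
  have hk0 : 0 < k := by linarith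
  have h := strictConcaveOn_sin_Icc.concaveOn.2 (⟨by positivity, hkθ⟩ : k * θ ∈ Icc 0 π)
    (⟨le_rfl, pi_pos.le⟩ : (0 : ℝ) ∈ Icc 0 π) (inv_nonneg.2 hk0.le)
    (sub_nonneg.2 (inv_le_one_of_one_le₀ hk)) (add_sub_cancel k⁻¹ 1)
  simp only [smul_eq_mul, mul_zero, add_zero, sin_zero, inv_mul_cancel_left₀ hk0.ne'] at h
  rwa [inv_mul_le_iff₀ hk0] at h

/-- With `θ = arg w`, `Im (gMap α w) ≥ 0` reads `‖w‖ ^ α sin ((α + 1) θ) ≥ sin θ`, and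
`sin ((α + 1) θ) ≤ (α + 1) sin θ`. -/
lemma inv_le_norm_rpow_of_mem_sector (hα : 1 < α) {w : ℂ} (hw : w ∈ sector α)
    (hg : 0 ≤ (gMap α w).im) : (α + 1)⁻¹ ≤ ‖w‖ ^ α := by
  obtain ⟨h0, hβ⟩ := arg_mem_Ioo_of_mem_sector hα hw
  have hr : 0 < ‖w‖ := norm_pos_iff.2 fun h => by simp [h] at h0
  have hsin : 0 < sin (arg w) :=
    sin_pos_of_pos_of_lt_pi h0 (hβ.trans (by linarith [sectorAngle_lt_pi_div_two hα]))
  have hmul : sin (arg w * (α + 1)) ≤ (α + 1) * sin (arg w) := by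
    rw [mul_comm]
    refine sin_mul_le_mul_sin (by linarith) h0.le ?_
    rw [← mul_sectorAngle (α := α) (by linarith), mul_comm]
    exact mul_le_mul_of_nonneg_right hβ.le (by linarith)
  rw [im_gMap, ← Complex.norm_mul_sin_arg, Real.rpow_add hr, Real.rpow_one] at hg
  have key : ‖w‖ * sin (arg w) * 1 ≤ ‖w‖ * sin (arg w) * (‖w‖ ^ α * (α + 1)) := by
    have := mul_le_mul_of_nonneg_left hmul (by positivity : 0 ≤ ‖w‖ ^ α * ‖w‖)
    nlinarith
  rw [inv_le_iff_one_le_mul₀ (by linarith)]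
  exact le_of_mul_le_mul_left key (by positivity)

lemma mem_truncCone_of_mem_dom (hα : 1 < α) {w : ℂ} (hw : w ∈ sector α ∪ posRay)
    (hg : gMap α w ∈ UHP ∪ posRay) : w ∈ truncCone α := by
  rcases hw with hw | hw
  · exact ⟨sector_subset_closedCone hw,
      inv_le_norm_rpow_of_mem_sector hα hw (hg.elim (fun h => le_of_lt h) (·.1.ge))⟩
  · refine ⟨posRay_subset_closedCone hα hw, ?_⟩
    have h1 : 1 ≤ ‖w‖ := hw.2.trans (Complex.re_le_norm w)
    calc (α + 1)⁻¹ ≤ 1 := inv_le_one_of_one_le₀ (by linarith)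
      _ ≤ ‖w‖ ^ α := Real.one_le_rpow h1 (by linarith)

lemma ne_zero_of_mem_truncCone (hα : 0 < α) {w : ℂ} (hw : w ∈ truncCone α) : w ≠ 0 := by
  rintro rfl
  have : (α + 1)⁻¹ ≤ ‖(0 : ℂ)‖ ^ α := hw.2
  rw [norm_zero, Real.zero_rpow hα.ne'] at this
  exact absurd this (not_le.2 (inv_pos.2 (by linarith)))

lemma mem_dom_of_mem_truncCone (hα : 1 < α) {w : ℂ} (hw : w ∈ truncCone α)
    (hg : gMap α w ∈ UHP ∪ posRay) : w ∈ sector α ∪ posRay := by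
  have hre := re_pos_of_mem_closedCone hα hw.1 (ne_zero_of_mem_truncCone (by linarith) hw)
  have hgim : 0 ≤ (gMap α w).im := hg.elim (fun h => le_of_lt h) (·.1.ge)
  rcases hw.1.1.eq_or_lt with him | him
  · have hw' : w = (w.re : ℂ) := Complex.ext rfl (by simp [← him])
    rw [hw', gMap_ofReal hre.le] at hg
    refine Or.inr ⟨him.symm, not_lt.1 fun h => ?_⟩
    rcases hg with hg | hg
    · simp [UHP] at hg
    · have := hg.2
      rw [Complex.ofReal_re] at this
      linarith [realMap_lt_one (α := α) (by linarith) hre h]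
  rcases hw.1.2.eq_or_lt with hedge | hlt
  · have harg : arg w = sectorAngle α := by
      rw [arg_eq_arctan hre, hedge, mul_div_cancel_left₀ _ hre.ne', arctan_tan_sectorAngle hα]
    rw [im_gMap, harg, mul_sectorAngle (by linarith), sin_pi] at hgim
    linarith
  · exact Or.inl ⟨hre, him, hlt⟩

end Boundary

section Compactness

variable {ι : Type*} {l : Filter ι} {u : ι → ℂ} {z : ℂ}

lemma eventually_mem_closedBall_of_tendsto_gMap (hα : 1 ≤ α)
    (hlim : Tendsto (gMap α ∘ u) l (𝓝 z)) :
    ∀ᶠ i in l, u i ∈ Metric.closedBall 0 (‖z‖ + 3) :=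
  (hlim.norm.eventually (gt_mem_nhds (lt_add_one ‖z‖))).mono fun i hi => by
    rw [mem_closedBall_zero_iff]
    linarith [norm_le_norm_gMap_add_two hα (u i), show ‖gMap α (u i)‖ < ‖z‖ + 1 from hi]

lemma mapClusterPt_mem_dom (hα : 1 < α)
    (hu : ∀ᶠ i in l, u i ∈ sector α ∪ posRay ∧ gMap α (u i) ∈ UHP ∪ posRay)
    (hz : z ∈ UHP ∪ posRay) (hlim : Tendsto (gMap α ∘ u) l (𝓝 z)) {y : ℂ}
    (hy : MapClusterPt y l u) : y ∈ sector α ∪ posRay ∧ gMap α y = z := by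
  have hK : y ∈ truncCone α := (isClosed_truncCone (by linarith)).mem_of_mapClusterPt hy
    (hu.mono fun i hi => mem_truncCone_of_mem_dom hα hi.1 hi.2)
  have hslit : y ∈ slitPlane := Complex.mem_slitPlane_iff.2 <| Or.inl <|
    re_pos_of_mem_closedCone hα hK.1 (ne_zero_of_mem_truncCone (by linarith) hK)
  have hgy : gMap α y = z :=
    have hcont := (hasStrictDerivAt_gMap (α := α) hslit).hasDerivAt.continuousAt
    eq_of_nhds_neBot ((hy.tendsto_comp hcont).clusterPt.mono hlim).neBot
  exact ⟨mem_dom_of_mem_truncCone hα hK (hgy ▸ hz), hgy⟩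

lemma exists_mem_dom_of_tendsto_gMap [l.NeBot] (hα : 1 < α)
    (hu : ∀ᶠ i in l, u i ∈ sector α ∪ posRay ∧ gMap α (u i) ∈ UHP ∪ posRay)
    (hz : z ∈ UHP ∪ posRay) (hlim : Tendsto (gMap α ∘ u) l (𝓝 z)) :
    ∃ y ∈ sector α ∪ posRay, gMap α y = z := by
  obtain ⟨y, -, hy⟩ := (isCompact_closedBall (0 : ℂ) (‖z‖ + 3)).exists_mapClusterPt
    (le_principal_iff.2 (eventually_mem_closedBall_of_tendsto_gMap hα.le hlim))
  exact ⟨y, mapClusterPt_mem_dom hα hu hz hlim hy⟩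

lemma tendsto_of_tendsto_gMap (hα : 1 < α)
    (hu : ∀ᶠ i in l, u i ∈ sector α ∪ posRay ∧ gMap α (u i) ∈ UHP ∪ posRay)
    (hz : z ∈ UHP ∪ posRay) (hlim : Tendsto (gMap α ∘ u) l (𝓝 z)) {y : ℂ}
    (hy : y ∈ sector α ∪ posRay) (hgy : gMap α y = z) : Tendsto u l (𝓝 y) :=
  (isCompact_closedBall (0 : ℂ) (‖z‖ + 3)).tendsto_nhds_of_unique_mapClusterPt
    (eventually_mem_closedBall_of_tendsto_gMap hα.le hlim) fun _ _ hx =>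
      let ⟨hxD, hgx⟩ := mapClusterPt_mem_dom hα hu hz hlim hx
      gMap_injOn hα hxD hy (hgx.trans hgy.symm)

end Compactness

section Surjectivity

lemma deriv_gMap_ne_zero (hα : 1 < α) {w : ℂ} (hw : w ∈ sector α) :
    ((α + 1 : ℝ) : ℂ) * w ^ (α : ℂ) - 1 ≠ 0 := fun h => by
  have := congrArg Complex.im h
  rw [Complex.sub_im, Complex.im_ofReal_mul, Complex.one_im, sub_zero, Complex.zero_im] at this
  nlinarith [im_cpow_pos_of_mem_sector hα hw]

lemma isOpen_image_sector (hα : 1 < α) : IsOpen (gMap α '' sector α) := by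
  rw [isOpen_iff_mem_nhds]
  rintro _ ⟨w, hw, rfl⟩
  rw [← (hasStrictDerivAt_gMap (Complex.mem_slitPlane_iff.2 (Or.inl hw.1))).map_nhds_eq
    (deriv_gMap_ne_zero hα hw)]
  exact image_mem_map (isOpen_sector.mem_nhds hw)

/-- The unit vector of argument `π / (2 (α + 1))` is mapped into the upper half-plane. -/
lemma exists_mem_sector_im_gMap_pos (hα : 1 < α) : ∃ w ∈ sector α, 0 < (gMap α w).im := by
  set θ := sectorAngle α / 2 with hθ
  have hβ := sectorAngle_pos (α := α) (by linarith)
  have hβ' := sectorAngle_lt_pi_div_two hα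
  have hcos : 0 < cos θ := cos_pos_of_mem_Ioo ⟨by linarith [hθ], by linarith [hθ]⟩
  have hsin : 0 < sin θ := sin_pos_of_pos_of_lt_pi (by positivity) (by linarith [hθ])
  set w := Complex.exp (θ * Complex.I)
  have hre : w.re = cos θ := Complex.exp_ofReal_mul_I_re θ
  have him : w.im = sin θ := Complex.exp_ofReal_mul_I_im θ
  have htan : tan θ < tan (sectorAngle α) :=
    tan_lt_tan_of_lt_of_lt_pi_div_two (by linarith [hθ]) hβ' (by linarith [hθ])
  refine ⟨w, ⟨hre ▸ hcos, him ▸ hsin, ?_⟩, ?_⟩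
  · rw [hre, him, show sin θ = cos θ * tan θ by rw [tan_eq_sin_div_cos]; field_simp]
    exact mul_lt_mul_of_pos_left htan hcos
  · have harg : arg w = θ := by
      rw [arg_eq_arctan (hre ▸ hcos), hre, him, ← tan_eq_sin_div_cos,
        arctan_tan (by linarith [hθ]) (by linarith [hθ])]
    rw [im_gMap, harg, Complex.norm_exp_ofReal_mul_I, Real.one_rpow, one_mul, him,
      show θ * (α + 1) = π / 2 by rw [div_mul_eq_mul_div, mul_sectorAngle (by linarith)],
      sin_pi_div_two, sub_pos]
    exact (sin_lt_sin_of_lt_of_le_pi_div_two (by linarith [hθ]) le_rfl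
      (by linarith [hθ])).trans_eq sin_pi_div_two

lemma UHP_subset_image_sector (hα : 1 < α) : UHP ⊆ gMap α '' sector α := by
  set s := gMap α '' sector α ∩ UHP
  suffices h : closure s ∩ UHP ⊆ s by
    obtain ⟨w, hw, hgw⟩ := exists_mem_sector_im_gMap_pos hα
    exact fun z hz => ((convex_halfSpace_im_gt 0).isPreconnected.subset_of_closure_inter_subset
      ((isOpen_image_sector hα).inter isOpen_UHP) ⟨_, hgw, ⟨w, hw, rfl⟩, hgw⟩ h hz).1
  rintro z ⟨hzc, hz⟩
  have : (𝓝[s] z).NeBot := mem_closure_iff_nhdsWithin_neBot.1 hzc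
  set u := Function.invFunOn (gMap α) (sector α)
  have hu : ∀ v ∈ s, u v ∈ sector α ∧ gMap α (u v) = v := fun v hv =>
    Function.invFunOn_pos hv.1
  obtain ⟨y, hy, rfl⟩ := exists_mem_dom_of_tendsto_gMap hα
    (eventually_nhdsWithin_of_forall fun v hv =>
      ⟨Or.inl (hu v hv).1, by rw [(hu v hv).2]; exact Or.inl hv.2⟩)
    (Or.inl hz) ((tendsto_id.mono_left nhdsWithin_le_nhds).congr'
      (eventually_nhdsWithin_of_forall fun v hv => (hu v hv).2.symm))
  refine ⟨⟨y, hy.resolve_right fun hy' => ?_, rfl⟩, hz⟩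
  exact (ne_of_gt hz) (im_gMap_eq_zero_of_mem_posRay hy')

lemma gMap_surjOn (hα : 1 < α) : SurjOn (gMap α) (sector α ∪ posRay) (UHP ∪ posRay) := by
  rintro z (hz | hz)
  · obtain ⟨w, hw, rfl⟩ := UHP_subset_image_sector hα hz
    exact ⟨w, Or.inl hw, rfl⟩
  · obtain ⟨t, ht, hzt⟩ := realMap_surjOn hα.le hz.2
    refine ⟨t, Or.inr ⟨Complex.ofReal_im t, ht⟩, ?_⟩
    rw [gMap_ofReal (by linarith [mem_Ici.1 ht]), hzt]
    exact Complex.ext rfl hz.1.symm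

end Surjectivity

section Solution

def solution (α : ℝ) : ℂ → ℂ := Function.invFunOn (gMap α) (sector α ∪ posRay)

variable {z : ℂ}

lemma solution_mem (hα : 1 < α) (hz : z ∈ UHP ∪ posRay) :
    solution α z ∈ sector α ∪ posRay :=
  (gMap_surjOn hα).mapsTo_invFunOn hz

lemma gMap_solution (hα : 1 < α) (hz : z ∈ UHP ∪ posRay) : gMap α (solution α z) = z :=
  (gMap_surjOn hα).rightInvOn_invFunOn hz

lemma solution_gMap (hα : 1 < α) {w : ℂ} (hw : w ∈ sector α ∪ posRay) :
    solution α (gMap α w) = w :=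
  (gMap_injOn hα).leftInvOn_invFunOn hw

lemma solution_realMap (hα : 1 < α) {t : ℝ} (ht : 1 ≤ t) :
    solution α (realMap α t) = t := by
  rw [← gMap_ofReal (by linarith)]
  exact solution_gMap hα (Or.inr ⟨Complex.ofReal_im t, ht⟩)

lemma solution_mem_sector (hα : 1 < α) (hz : z ∈ UHP) : solution α z ∈ sector α :=
  (solution_mem hα (Or.inl hz)).resolve_right fun h => by
    have : z.im = 0 := by rw [← gMap_solution hα (Or.inl hz), im_gMap_eq_zero_of_mem_posRay h]
    exact (ne_of_gt hz) this

lemma solution_mem_posRay (hα : 1 < α) (hz : z ∈ posRay) : solution α z ∈ posRay := by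
  obtain ⟨t, ht, hzt⟩ := realMap_surjOn hα.le hz.2
  rw [show z = realMap α t from Complex.ext hzt.symm hz.1, solution_realMap hα ht]
  exact ⟨Complex.ofReal_im t, ht⟩

lemma realMap_re_solution (hα : 1 < α) {x : ℝ} (hx : 1 ≤ x) :
    realMap α (solution α x).re = x := by
  have hx' : (x : ℂ) ∈ posRay := ⟨Complex.ofReal_im x, hx⟩
  have h := gMap_solution hα (Or.inr hx')
  rw [gMap_of_mem_posRay (solution_mem_posRay hα hx')] at h
  exact_mod_cast h

lemma one_lt_re_solution (hα : 1 < α) {x : ℝ} (hx : 1 < x) : 1 < (solution α x).re := by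
  refine lt_of_le_of_ne (solution_mem_posRay hα ⟨Complex.ofReal_im x, hx.le⟩).2 fun h => ?_
  have := realMap_re_solution hα hx.le
  rw [← h, realMap_one] at this
  exact hx.ne this

lemma continuousWithinAt_solution (hα : 1 < α) (hz : z ∈ UHP ∪ posRay) :
    ContinuousWithinAt (solution α) (UHP ∪ posRay) z :=
  tendsto_of_tendsto_gMap hα
    (eventually_nhdsWithin_of_forall fun v hv =>
      ⟨solution_mem hα hv, by rwa [gMap_solution hα hv]⟩) hz
    ((tendsto_id.mono_left nhdsWithin_le_nhds).congr'
      (eventually_nhdsWithin_of_forall fun v hv => (gMap_solution hα hv).symm))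
    (solution_mem hα hz) (gMap_solution hα hz)

lemma hasStrictDerivAt_solution (hα : 1 < α) (hz : z ∈ UHP) :
    HasStrictDerivAt (solution α)
      (((α + 1 : ℝ) : ℂ) * solution α z ^ (α : ℂ) - 1)⁻¹ z :=
  have hsector := solution_mem_sector hα hz
  HasStrictDerivAt.of_local_left_inverse
    ((continuousWithinAt_solution hα (Or.inl hz)).continuousAt
      (mem_of_superset (isOpen_UHP.mem_nhds hz) subset_union_left))
    (hasStrictDerivAt_gMap (Complex.mem_slitPlane_iff.2 (Or.inl hsector.1)))
    (deriv_gMap_ne_zero hα hsector)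
    (Filter.mem_of_superset (isOpen_UHP.mem_nhds hz) fun _ hv => gMap_solution hα (Or.inl hv))

lemma isPal_solution (hα : 1 < α) : IsPal (solution α) where
  holo _ hz := (hasStrictDerivAt_solution hα hz).hasDerivAt.differentiableAt.differentiableWithinAt
  mapsUHP _ hz := (solution_mem_sector hα hz).2.1
  cont _ hz := continuousWithinAt_solution hα hz
  realOnRay _ hz := (solution_mem_posRay hα hz).1
  fix_one := by simpa [realMap_one] using solution_realMap hα le_rfl

end Solution

end PalEquation

open PalEquation in
/-- Theorem 1, existence form: for every α > 1 there is a
function F in the class P solving the functional equation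
F(z)^{α+1} = F(z) + z − 1 on H ∪ [1, ∞), with F(x) > 1 for real x > 1; on
(1, ∞) it is the inverse of the strictly increasing map
t ↦ t^{α+1} − t + 1 from (1, ∞) onto (1, ∞). -/
theorem theorem_one_existence (α : ℝ) (hα : 1 < α) :
    StrictMonoOn (fun t : ℝ => t ^ (α + 1) - t + 1) (Set.Ioi 1) ∧
    (fun t : ℝ => t ^ (α + 1) - t + 1) '' Set.Ioi 1 = Set.Ioi 1 ∧
    ∃ F : ℂ → ℂ, IsPal F ∧
      (∀ z ∈ UHP ∪ posRay, F z ^ (((α + 1 : ℝ)) : ℂ) = F z + z - 1) ∧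
      (∀ x : ℝ, 1 < x → 1 < (F (x : ℂ)).re) ∧
      (∀ x : ℝ, 1 < x → (F (x : ℂ)).re ^ (α + 1) - (F (x : ℂ)).re + 1 = x) := by
  refine ⟨(realMap_strictMonoOn (by linarith)).mono Ioi_subset_Ici_self, realMap_image_Ioi hα.le,
    solution α, isPal_solution hα, fun z hz => ?_, fun x hx => one_lt_re_solution hα hx,
    fun x hx => realMap_re_solution hα hx.le⟩
  have h := gMap_solution hα hz
  rw [gMap] at h
  linear_combination h
end
end

section
/- The function Φ(z) = 1/2 + (z − 3/4)^{1/2} (principal square root), which expresses p₂ in terms of p₃ for the linear model (α = 1), belongs to the class P of Pick Argument Lessening functions: Φ is holomorphic on H with Im Φ(z) > 0 for z ∈ H, extends continuously to [1, ∞) with real values there, Φ(1) = 1; moreover Φ satisfies Φ(z)² = Φ(z) + z − 1 for all z ∈ H ∪ [1, ∞). -/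
/-!
Write `w = z - 3/4`. The principal square root `√w = w ^ (1/2)` is holomorphic off the
closed negative axis, which `H ∪ [1, ∞)` avoids after the shift by `3/4 < 1`.
The formula `Im √w = √((|w| - Re w) / 2)` for `Im w ≥ 0` gives `Im √w > 0` on `H`
(as `|w| > Re w` there) and `Im √w = 0` on `[0, ∞)`. Finally `(√w)² = w` for every `w`, so
`Φ = 1/2 + √w` is a root of `Φ² - Φ - (z - 1) = (Φ - 1/2)² - w`, and `Φ(1) = 1/2 + √(1/4) = 1`.
-/

open Complex

lemma im_cpow_inv_two_pos {w : ℂ} (hw : 0 < w.im) : 0 < (w ^ (2⁻¹ : ℂ)).im := by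
  rw [cpow_inv_two_im_eq_sqrt hw.le, Real.sqrt_pos]
  linarith [abs_re_lt_norm.2 hw.ne', le_abs_self w.re]

lemma im_cpow_inv_two_eq_zero {w : ℂ} (hre : 0 ≤ w.re) (him : w.im = 0) :
    (w ^ (2⁻¹ : ℂ)).im = 0 := by
  have hw : w = (w.re : ℂ) := ext rfl (by simp [him])
  rw [cpow_inv_two_im_eq_sqrt him.ge, hw, Complex.norm_of_nonneg hre]
  simp

lemma sub_mem_slitPlane_of_mem_UHP_union_posRay {c z : ℂ} (hc : c.im = 0) (hc1 : c.re < 1)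
    (hz : z ∈ UHP ∪ posRay) : z - c ∈ slitPlane := by
  rw [mem_slitPlane_iff, sub_re, sub_im, hc, sub_zero]
  rcases hz with hz | ⟨-, hz⟩
  · exact .inr hz.ne'
  · exact .inl (by linarith)

noncomputable def linearModel (z : ℂ) : ℂ := 1 / 2 + (z - 3 / 4) ^ (2⁻¹ : ℂ)

lemma linearModel_sq (z : ℂ) : linearModel z ^ 2 = linearModel z + z - 1 := by
  have hsq : ((z - 3 / 4) ^ (2⁻¹ : ℂ)) ^ 2 = z - 3 / 4 := cpow_ofNat_inv_pow _ 2
  unfold linearModel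
  linear_combination hsq

lemma linearModel_one : linearModel 1 = 1 := by
  have hsqrt : ((1 : ℂ) - 3 / 4) ^ (2⁻¹ : ℂ) = 1 / 2 := by
    rw [show (1 : ℂ) - 3 / 4 = (1 / 2) ^ 2 by norm_num]
    exact sq_cpow_two_inv (by norm_num)
  rw [linearModel, hsqrt]
  norm_num

lemma isPal_linearModel : IsPal linearModel := by
  have hslit : ∀ z ∈ UHP ∪ posRay, z - 3 / 4 ∈ slitPlane :=
    fun z ↦ sub_mem_slitPlane_of_mem_UHP_union_posRay (by norm_num) (by norm_num)
  have him (z : ℂ) : (linearModel z).im = ((z - 3 / 4) ^ (2⁻¹ : ℂ)).im := by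
    simp [linearModel]
  refine ⟨fun z hz ↦ ?_, fun z hz ↦ ?_, fun z hz ↦ ?_, fun z hz ↦ ?_, linearModel_one⟩
  · exact (((differentiableAt_id.sub_const _).cpow_const
      (hslit z (.inl hz))).const_add _).differentiableWithinAt
  · rw [him]
    exact im_cpow_inv_two_pos (by simpa [UHP] using hz)
  · exact ((continuousAt_id.sub continuousAt_const).cpow continuousAt_const
      (hslit z hz)).const_add _ |>.continuousWithinAt
  · rw [him]
    exact im_cpow_inv_two_eq_zero (by norm_num; linarith [hz.2]) (by simpa using hz.1)

/-- the linear-model (α = 1) solution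
Φ(z) = 1/2 + (z − 3/4)^{1/2} belongs to the class P and satisfies
Φ(z)² = Φ(z) + z − 1 on H ∪ [1, ∞). -/
theorem linear_model_in_P :
    IsPal (fun z : ℂ => 1 / 2 + (z - 3 / 4) ^ (((1 / 2 : ℝ)) : ℂ)) ∧
      ∀ z ∈ UHP ∪ posRay,
        (1 / 2 + (z - 3 / 4) ^ (((1 / 2 : ℝ)) : ℂ)) ^ (2 : ℕ) =
          (1 / 2 + (z - 3 / 4) ^ (((1 / 2 : ℝ)) : ℂ)) + z - 1 := by
  have hexp : ((1 / 2 : ℝ) : ℂ) = 2⁻¹ := by norm_num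
  simp only [hexp]
  exact ⟨isPal_linearModel, fun z _ ↦ linearModel_sq z⟩
end

section
/- Fix a real α > 1 and 0 < a < 1, let f_a(x) = −|x|^α + a, and let xₙ = f_aⁿ(0) denote the orbit of 0 (so x₀ = 0, x₁ = a). Then for every integer k ≥ 0 one has the strict ordering x_{2k} < x_{2k+2} < x_{2k+3} < x_{2k+1}; in particular, for every n ≥ 3 the interval with endpoints x_{n−1} and x_n is contained in the interval with endpoints x_{n−2} and x_{n−3}, and all xₙ with n ≥ 1 are positive. -/
/-- for α > 1, 0 < a < 1 and the orbit xₙ = f_aⁿ(0) of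
f_a(x) = −|x|^α + a, every quadruple is strictly ordered as
x_{2k} < x_{2k+2} < x_{2k+3} < x_{2k+1}; consequently for n ≥ 3 the interval
with endpoints x_{n−1}, x_n is contained in the one with endpoints
x_{n−2}, x_{n−3}, and xₙ > 0 for all n ≥ 1. -/
theorem orbit_nesting (α : ℝ) (hα : 1 < α) (a : ℝ) (ha : a ∈ Set.Ioo (0 : ℝ) 1)
    (x : ℕ → ℝ) (hx0 : x 0 = 0) (hx : ∀ n : ℕ, x (n + 1) = -|x n| ^ α + a) :
    (∀ k : ℕ,
      x (2 * k) < x (2 * k + 2) ∧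
      x (2 * k + 2) < x (2 * k + 3) ∧
      x (2 * k + 3) < x (2 * k + 1)) ∧
    (∀ n : ℕ, 3 ≤ n →
      Set.uIcc (x (n - 1)) (x n) ⊆ Set.uIcc (x (n - 2)) (x (n - 3))) ∧
    (∀ n : ℕ, 1 ≤ n → 0 < x n) := by
  obtain ⟨ha0, ha1⟩ := ha
  have hα0 : (0 : ℝ) < α := by linarith
  -- monotonicity: f is strictly decreasing on nonnegatives
  have hdec : ∀ m n : ℕ, 0 ≤ x m → x m < x n → x (n + 1) < x (m + 1) := by
    intro m n hm hmn
    rw [hx, hx, abs_of_nonneg hm, abs_of_nonneg (le_trans hm hmn.le)]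
    have := Real.rpow_lt_rpow hm hmn hα0
    linarith
  have h1 : x 1 = a := by
    rw [hx 0, hx0, abs_zero, Real.zero_rpow (ne_of_gt hα0)]; ring
  have haα : a ^ α < a := by
    have := Real.rpow_lt_rpow_of_exponent_gt ha0 ha1 hα
    rwa [Real.rpow_one] at this
  have h2 : x 2 = -a ^ α + a := by
    rw [hx 1, h1, abs_of_pos ha0]
  have h2pos : 0 < x 2 := by rw [h2]; linarith
  have h2lt1 : x 2 < x 1 := by
    rw [h2, h1]
    have := Real.rpow_pos_of_pos ha0 α
    linarith
  have hQ : ∀ k : ℕ, 0 ≤ x (2 * k) ∧ x (2 * k) < x (2 * k + 2) ∧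
      x (2 * k + 2) < x (2 * k + 3) ∧ x (2 * k + 3) < x (2 * k + 1) := by
    intro k
    induction k with
    | zero =>
      refine ⟨le_of_eq hx0.symm, by rw [hx0]; exact h2pos, ?_, ?_⟩
      · exact hdec 2 1 h2pos.le h2lt1
      · have := hdec 0 2 (le_of_eq hx0.symm) (by rw [hx0]; exact h2pos)
        exact this
    | succ k ih =>
      obtain ⟨h0, h02, h23, h31⟩ := ih
      have p2 : 0 < x (2 * k + 2) := lt_of_le_of_lt h0 h02
      have p3 : 0 < x (2 * k + 3) := lt_trans p2 h23
      -- x(2k+4) < x(2k+3)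
      have hA : x (2 * k + 4) < x (2 * k + 3) := hdec (2 * k + 2) (2 * k + 3) p2.le h23
      -- x(2k+2) < x(2k+4)
      have hB : x (2 * k + 2) < x (2 * k + 4) := hdec (2 * k + 3) (2 * k + 1) p3.le h31
      have p4 : 0 < x (2 * k + 4) := lt_trans p2 hB
      -- x(2k+4) < x(2k+5)
      have hC : x (2 * k + 4) < x (2 * k + 5) := hdec (2 * k + 4) (2 * k + 3) p4.le hA
      -- x(2k+5) < x(2k+3)
      have hD : x (2 * k + 5) < x (2 * k + 3) := hdec (2 * k + 2) (2 * k + 4) p2.le hB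
      have e1 : 2 * (k + 1) = 2 * k + 2 := by ring
      have e2 : 2 * k + 2 + 2 = 2 * k + 4 := by omega
      have e3 : 2 * k + 2 + 3 = 2 * k + 5 := by omega
      have e4 : 2 * k + 2 + 1 = 2 * k + 3 := by omega
      rw [e1, e2, e3, e4]
      exact ⟨p2.le, hB, hC, hD⟩
  refine ⟨fun k => (hQ k).2, ?_, ?_⟩
  · intro n hn
    obtain ⟨k, hk⟩ : ∃ k, n = 2 * k + 3 ∨ n = 2 * k + 4 := ⟨(n - 3) / 2, by omega⟩
    rcases hk with rfl | rfl
    · obtain ⟨h0, h02, h23, h31⟩ := hQ k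
      have e1 : 2 * k + 3 - 1 = 2 * k + 2 := by omega
      have e2 : 2 * k + 3 - 2 = 2 * k + 1 := by omega
      have e3 : 2 * k + 3 - 3 = 2 * k := by omega
      rw [e1, e2, e3, Set.uIcc_of_le h23.le,
        Set.uIcc_of_ge (le_trans h02.le (le_trans h23.le h31.le))]
      exact Set.Icc_subset_Icc h02.le h31.le
    · obtain ⟨h0, h02, h23, h31⟩ := hQ k
      obtain ⟨h0', h02', h23', h31'⟩ := hQ (k + 1)
      have e1 : 2 * (k + 1) = 2 * k + 2 := by ring
      have e2 : 2 * k + 2 + 2 = 2 * k + 4 := by omega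
      have e3 : 2 * k + 2 + 3 = 2 * k + 5 := by omega
      have e4 : 2 * k + 2 + 1 = 2 * k + 3 := by omega
      simp only [e1, e2, e3, e4] at h02' h23' h31'
      have f1 : 2 * k + 4 - 1 = 2 * k + 3 := by omega
      have f2 : 2 * k + 4 - 2 = 2 * k + 2 := by omega
      have f3 : 2 * k + 4 - 3 = 2 * k + 1 := by omega
      have h43 : x (2 * k + 4) < x (2 * k + 3) := lt_trans h23' h31'
      rw [f1, f2, f3, Set.uIcc_of_ge h43.le,
        Set.uIcc_of_le (le_trans h23.le h31.le)]
      exact Set.Icc_subset_Icc h02'.le h31.le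
  · intro n hn
    obtain ⟨k, hk⟩ : ∃ k, n = 2 * k + 1 ∨ n = 2 * k + 2 := ⟨(n - 1) / 2, by omega⟩
    obtain ⟨h0, h02, h23, h31⟩ := hQ k
    have p2 : 0 < x (2 * k + 2) := lt_of_le_of_lt h0 h02
    rcases hk with rfl | rfl
    · exact lt_trans (lt_trans p2 h23) h31
    · exact p2
end

section
/- Fix a real α > 1 and 0 < a < 1, let f_a(x) = −|x|^α + a and xₙ = f_aⁿ(0). Define p₂ = x₁/x₂ and p₃ = (x₃/x₂) · ((x₁ − x₂)/(x₁ − x₃)) (the cross-ratio exponent of the Poincaré length of (x₂, x₃) within (x₀, x₁)). Then the denominators are nonzero and the functional equation (1) holds: p₂^{α+1} = p₂ + p₃ − 1, equivalently p₂ = (1 + (p₃ − 1)/p₂)^{1/α}. -/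
/-- for α > 1, 0 < a < 1 and the orbit xₙ = f_aⁿ(0) of
f_a(x) = −|x|^α + a, with p₂ = x₁/x₂ and
p₃ = (x₃/x₂)·((x₁ − x₂)/(x₁ − x₃)), the denominators are nonzero and the
functional equation (1) holds: p₂^{α+1} = p₂ + p₃ − 1, equivalently
p₂ = (1 + (p₃ − 1)/p₂)^{1/α}. -/
theorem functional_equation_p2_p3 (α : ℝ) (hα : 1 < α) (a : ℝ)
    (ha : a ∈ Set.Ioo (0 : ℝ) 1)
    (x : ℕ → ℝ) (hx0 : x 0 = 0) (hx : ∀ n : ℕ, x (n + 1) = -|x n| ^ α + a) :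
    x 2 ≠ 0 ∧ x 1 - x 3 ≠ 0 ∧
    (x 1 / x 2) ^ (α + 1) =
      x 1 / x 2 + (x 3 / x 2) * ((x 1 - x 2) / (x 1 - x 3)) - 1 ∧
    x 1 / x 2 =
      (1 + ((x 3 / x 2) * ((x 1 - x 2) / (x 1 - x 3)) - 1) / (x 1 / x 2)) ^
        (1 / α) := by
  obtain ⟨ha0, ha1⟩ := ha
  have hαne : α ≠ 0 := by positivity
  have hx1 : x 1 = a := by
    have := hx 0
    rw [hx0] at this
    simpa [Real.zero_rpow hαne] using this
  have hAa : a ^ α < a := by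
    have := Real.rpow_lt_rpow_of_exponent_gt ha0 ha1 hα
    simpa using this
  have hApos : (0:ℝ) < a ^ α := Real.rpow_pos_of_pos ha0 α
  have hx2 : x 2 = a - a ^ α := by
    have := hx 1
    rw [hx1, abs_of_pos ha0] at this
    linarith
  set u : ℝ := a - a ^ α with hu
  have hupos : 0 < u := by simp [hu]; linarith
  have hUpos : (0:ℝ) < u ^ α := Real.rpow_pos_of_pos hupos α
  have hx3 : x 3 = a - u ^ α := by
    have := hx 2
    rw [hx2, abs_of_pos hupos] at this
    linarith
  have h2ne : x 2 ≠ 0 := by rw [hx2]; linarith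
  have h13 : x 1 - x 3 = u ^ α := by rw [hx1, hx3]; ring
  have h13ne : x 1 - x 3 ≠ 0 := by rw [h13]; exact ne_of_gt hUpos
  -- key power identities
  have hA1 : a ^ (α + 1) = a ^ α * a := by
    rw [Real.rpow_add ha0, Real.rpow_one]
  have hU1 : u ^ (α + 1) = u ^ α * u := by
    rw [Real.rpow_add hupos, Real.rpow_one]
  have heq : (x 1 / x 2) ^ (α + 1) =
      x 1 / x 2 + (x 3 / x 2) * ((x 1 - x 2) / (x 1 - x 3)) - 1 := by
    rw [hx1, hx2, hx3, Real.div_rpow ha0.le hupos.le, hA1, hU1]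
    have h12 : a - u = a ^ α := by rw [hu]; ring
    have h23 : a - (a - u ^ α) = u ^ α := by ring
    rw [h23, ← h12]
    field_simp
    ring
  refine ⟨h2ne, h13ne, heq, ?_⟩
  have hp2pos : 0 < x 1 / x 2 := by
    rw [hx1, hx2]; positivity
  have hinner : 1 + ((x 3 / x 2) * ((x 1 - x 2) / (x 1 - x 3)) - 1) / (x 1 / x 2)
      = (x 1 / x 2) ^ α := by
    have hp2ne : x 1 / x 2 ≠ 0 := ne_of_gt hp2pos
    have : (x 1 / x 2) ^ (α + 1) = (x 1 / x 2) ^ α * (x 1 / x 2) := by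
      rw [Real.rpow_add hp2pos, Real.rpow_one]
    have hs : ∀ p X : ℝ, p ≠ 0 → 1 + (X - 1) / p = (p + X - 1) / p := by
      intro p X hp
      field_simp
      ring
    rw [hs _ _ hp2ne, ← heq, this, mul_div_assoc, div_self hp2ne, mul_one]
  rw [hinner, one_div, Real.rpow_rpow_inv hp2pos.le hαne]
end

section
/- Fix a real α > 1 and 0 < a < 1, let f_a(x) = −|x|^α + a and xₙ = f_aⁿ(0). Define p₂ = x₁/x₂, p₃ = (x₃/x₂)·((x₁ − x₂)/(x₁ − x₃)), and p₄ = ((x₁ − x₄)/(x₁ − x₃)) · ((x₃ − x₂)/(x₄ − x₂)). Then all denominators are nonzero, p₃·p₂/(p₂ + p₃ − 1) = x₃/x₂, and the functional equation (3) holds in the form ( p₃·p₂/(p₂ + p₃ − 1) )^α = p₄·p₂^α/(p₂^α + p₄ − 1); equivalently p₃ = ℓ⁻¹_{p₂}( ( p₄/(1 + (p₄ − 1)/p₂^α) )^{1/α} ) where ℓ_φ(t) = tφ/(φ + t − 1). -/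
/-!
Write `A, B, C` for `x₁, x₂, x₃`. The rational identity
`ℓ_{A/B}((C/B)·((A − B)/(A − C))) = C/B` holds whenever `A, B ≠ 0` and `A ≠ B, C`,
and it gives the identity for `p₃` at once. Along the orbit `x_{n+2} = x₁ − x_{n+1}^α`,
so the differences entering `p₄` are differences of the `α`-th powers `A^α, B^α, C^α`:
the same identity applied to these powers gives `ℓ_{p₂^α}(p₄) = (C/B)^α`.
-/

open Set

noncomputable def ell (φ t : ℝ) : ℝ := t * φ / (φ + t - 1)

lemma div_add_div_mul_div_sub_one {A B C : ℝ} (hB : B ≠ 0) (hAC : A ≠ C) :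
    A / B + C / B * ((A - B) / (A - C)) - 1 = A * (A - B) / (B * (A - C)) := by
  have hAC' : A - C ≠ 0 := sub_ne_zero.mpr hAC
  field_simp
  ring

lemma ell_div_div_mul_div {A B C : ℝ} (hA : A ≠ 0) (hB : B ≠ 0) (hAB : A ≠ B) (hAC : A ≠ C) :
    ell (A / B) (C / B * ((A - B) / (A - C))) = C / B := by
  have hAB' : A - B ≠ 0 := sub_ne_zero.mpr hAB
  have hAC' : A - C ≠ 0 := sub_ne_zero.mpr hAC
  rw [ell, div_add_div_mul_div_sub_one hB hAC]
  field_simp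

section Orbit

variable {α a : ℝ} {x : ℕ → ℝ}

lemma sub_rpow_mem_Ioo (hα : 1 < α) (ha : a < 1) {y : ℝ} (hy : y ∈ Ioc 0 a) :
    a - y ^ α ∈ Ioo 0 a := by
  have hy_pos : 0 < y ^ α := Real.rpow_pos_of_pos hy.1 α
  have hy_le : y ^ α ≤ a ^ α := Real.rpow_le_rpow hy.1.le hy.2 (by linarith)
  have ha_lt : a ^ α < a := by
    simpa using Real.rpow_lt_rpow_of_exponent_gt (hy.1.trans_le hy.2) ha hα
  constructor <;> linarith

lemma orbit_one (hx : ∀ n, x (n + 1) = -|x n| ^ α + a) (hα : α ≠ 0) (hx0 : x 0 = 0) :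
    x 1 = a := by
  rw [hx, hx0, abs_zero, Real.zero_rpow hα, neg_zero, zero_add]

lemma orbit_succ_mem_Ioc (hx : ∀ n, x (n + 1) = -|x n| ^ α + a)
    (hα : 1 < α) (ha : a ∈ Ioo 0 1) (hx0 : x 0 = 0) (n : ℕ) :
    x (n + 1) ∈ Ioc 0 a := by
  induction n with
  | zero => rw [orbit_one hx (zero_lt_one.trans hα).ne' hx0]; exact ⟨ha.1, le_rfl⟩
  | succ n ih =>
    rw [hx, abs_of_pos ih.1, neg_add_eq_sub]
    exact Ioo_subset_Ioc_self (sub_rpow_mem_Ioo hα ha.2 ih)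

lemma orbit_succ_succ (hx : ∀ n, x (n + 1) = -|x n| ^ α + a)
    (hα : 1 < α) (ha : a ∈ Ioo 0 1) (hx0 : x 0 = 0) (n : ℕ) :
    x (n + 2) = x 1 - x (n + 1) ^ α := by
  rw [hx (n + 1), abs_of_pos (orbit_succ_mem_Ioc hx hα ha hx0 n).1,
    orbit_one hx (zero_lt_one.trans hα).ne' hx0]
  ring

lemma orbit_crossRatio_eq (hx : ∀ n, x (n + 1) = -|x n| ^ α + a)
    (hα : 1 < α) (ha : a ∈ Ioo 0 1) (hx0 : x 0 = 0) :
    (x 1 - x 4) / (x 1 - x 3) * ((x 3 - x 2) / (x 4 - x 2)) =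
      x 3 ^ α / x 2 ^ α * ((x 1 ^ α - x 2 ^ α) / (x 1 ^ α - x 3 ^ α)) := by
  have hstep n := orbit_succ_succ hx hα ha hx0 n
  rw [show x 1 - x 4 = x 3 ^ α by linarith [hstep 2],
    show x 1 - x 3 = x 2 ^ α by linarith [hstep 1],
    show x 3 - x 2 = x 1 ^ α - x 2 ^ α by linarith [hstep 0, hstep 1],
    show x 4 - x 2 = x 1 ^ α - x 3 ^ α by linarith [hstep 0, hstep 2]]

end Orbit

/-- for α > 1, 0 < a < 1 and the orbit xₙ = f_aⁿ(0) of
f_a(x) = −|x|^α + a, with p₂ = x₁/x₂, p₃ = (x₃/x₂)·((x₁ − x₂)/(x₁ − x₃)) and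
p₄ = ((x₁ − x₄)/(x₁ − x₃))·((x₃ − x₂)/(x₄ − x₂)), all denominators are
nonzero, p₃·p₂/(p₂ + p₃ − 1) = x₃/x₂, and the functional equation (3) holds:
( p₃·p₂/(p₂ + p₃ − 1) )^α = p₄·p₂^α/(p₂^α + p₄ − 1). -/
theorem functional_equation_p3_p4 (α : ℝ) (hα : 1 < α) (a : ℝ)
    (ha : a ∈ Set.Ioo (0 : ℝ) 1)
    (x : ℕ → ℝ) (hx0 : x 0 = 0) (hx : ∀ n : ℕ, x (n + 1) = -|x n| ^ α + a)
    (p₂ p₃ p₄ : ℝ)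
    (hp₂ : p₂ = x 1 / x 2)
    (hp₃ : p₃ = (x 3 / x 2) * ((x 1 - x 2) / (x 1 - x 3)))
    (hp₄ : p₄ = ((x 1 - x 4) / (x 1 - x 3)) * ((x 3 - x 2) / (x 4 - x 2))) :
    x 2 ≠ 0 ∧ x 1 - x 3 ≠ 0 ∧ x 4 - x 2 ≠ 0 ∧ p₂ + p₃ - 1 ≠ 0 ∧
    p₃ * p₂ / (p₂ + p₃ - 1) = x 3 / x 2 ∧
    (p₃ * p₂ / (p₂ + p₃ - 1)) ^ α = p₄ * p₂ ^ α / (p₂ ^ α + p₄ - 1) := by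
  have hpos n : 0 < x (n + 1) := (orbit_succ_mem_Ioc hx hα ha hx0 n).1
  have hstep n : x (n + 2) = x 1 - x (n + 1) ^ α := orbit_succ_succ hx hα ha hx0 n
  have hpow_pos n : 0 < x (n + 1) ^ α := Real.rpow_pos_of_pos (hpos n) α
  have h21 : x 2 < x 1 := by linarith [hstep 0, hpow_pos 0]
  have h31 : x 3 < x 1 := by linarith [hstep 1, hpow_pos 1]
  have hpow_lt {m n : ℕ} (h : x (m + 1) < x (n + 1)) : x (m + 1) ^ α < x (n + 1) ^ α :=
    Real.rpow_lt_rpow (hpos m).le h (by linarith)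
  have hp₃_eq : p₃ * p₂ / (p₂ + p₃ - 1) = x 3 / x 2 := by
    rw [hp₂, hp₃]
    exact ell_div_div_mul_div (hpos 0).ne' (hpos 1).ne' h21.ne' h31.ne'
  have hp₂_rpow : p₂ ^ α = x 1 ^ α / x 2 ^ α := by
    rw [hp₂, Real.div_rpow (hpos 0).le (hpos 1).le]
  refine ⟨(hpos 1).ne', sub_ne_zero.mpr h31.ne', ?_, ?_, hp₃_eq, ?_⟩
  · linarith [hstep 0, hstep 2, hpow_lt h31]
  · rw [hp₂, hp₃, div_add_div_mul_div_sub_one (hpos 1).ne' h31.ne']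
    exact div_ne_zero (mul_ne_zero (hpos 0).ne' (sub_ne_zero.mpr h21.ne'))
      (mul_ne_zero (hpos 1).ne' (sub_ne_zero.mpr h31.ne'))
  · rw [hp₃_eq, Real.div_rpow (hpos 2).le (hpos 1).le, hp₂_rpow, hp₄,
      orbit_crossRatio_eq hx hα ha hx0]
    exact (ell_div_div_mul_div (hpow_pos 0).ne' (hpow_pos 1).ne' (hpow_lt h21).ne'
      (hpow_lt h31).ne').symm
end

section
/- Fix a real α ≥ 1. For every z in the upper half-plane H, the principal root z^{1/α} lies in H, fixes the rays from the origin in the sense that Arg(z^{1/α}) = Arg(z)/α, and satisfies the argument-lessening property Arg(z^{1/α} − 1) ≤ Arg(z − 1); that is, the root map r(z) = z^{1/α} belongs to the class P of Pick Argument Lessening functions. -/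
/-!
Write the root as `w = r e^{iφ}`, so that `z = w^α` and `arg z = αφ`. For `z` and `w` in the
upper half-plane, `arg (w - 1) ≤ arg (z - 1)` is the sign condition `0 ≤ Im ((z - 1) (w̄ - 1))`,
which in polar coordinates reads `r^(α-1) sin αφ ≤ r^α sin ((α-1)φ) + sin φ`. By concavity of
`sin` on `[0, π]`, `(α-1) sin αφ ≤ α sin ((α-1)φ)` and `sin αφ ≤ α sin φ`, and the weighted
AM-GM inequality `α r^(α-1) ≤ (α-1) r^α + 1` combines the two.
-/

open Real Complex Set ComplexConjugate

theorem Real.mul_sin_le_sin_mul {a x : ℝ} (ha₀ : 0 ≤ a) (ha₁ : a ≤ 1) (hx₀ : 0 ≤ x) (hx : x ≤ π) :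
    a * sin x ≤ sin (a * x) := by
  simpa using strictConcaveOn_sin_Icc.concaveOn.2 (x := x) (y := 0)
    ⟨hx₀, hx⟩ ⟨le_rfl, pi_pos.le⟩ ha₀ (sub_nonneg.2 ha₁) (add_sub_cancel a 1)

theorem Real.mul_rpow_sub_one_le {α r : ℝ} (hα : 1 ≤ α) (hr : 0 ≤ r) :
    α * r ^ (α - 1) ≤ (α - 1) * r ^ α + 1 := by
  have hα₀ : 0 < α := by linarith
  have amgm := geom_mean_le_arith_mean2_weighted (p₂ := 1)
    (div_nonneg (sub_nonneg.2 hα) hα₀.le) (one_div_nonneg.2 hα₀.le) (rpow_nonneg hr α) zero_le_one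
    (by field_simp; ring)
  rw [one_rpow, mul_one, ← rpow_mul hr, mul_div_cancel₀ _ hα₀.ne'] at amgm
  calc α * r ^ (α - 1) ≤ α * ((α - 1) / α * r ^ α + 1 / α * 1) := by gcongr
    _ = (α - 1) * r ^ α + 1 := by field_simp

theorem Real.rpow_sub_one_mul_sin_le {α r φ : ℝ} (hα : 1 ≤ α) (hr : 0 ≤ r) (hφ : 0 ≤ φ)
    (hαφ : α * φ ≤ π) :
    r ^ (α - 1) * sin (α * φ) ≤ r ^ α * sin ((α - 1) * φ) + sin φ := by
  have hα₀ : 0 < α := by linarith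
  have hsin : 0 ≤ sin (α * φ) := sin_nonneg_of_nonneg_of_le_pi (by positivity) hαφ
  have h₁ : (α - 1) * sin (α * φ) ≤ α * sin ((α - 1) * φ) := by
    have := mul_sin_le_sin_mul (div_nonneg (sub_nonneg.2 hα) hα₀.le)
      ((div_le_one hα₀).2 (by linarith)) (by positivity) hαφ
    rw [show (α - 1) / α * (α * φ) = (α - 1) * φ by field_simp, div_mul_eq_mul_div,
      div_le_iff₀ hα₀] at this
    linarith
  have h₂ : sin (α * φ) ≤ α * sin φ := by
    have := mul_sin_le_sin_mul (one_div_nonneg.2 hα₀.le) ((div_le_one hα₀).2 hα) (by positivity) hαφ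
    rw [show 1 / α * (α * φ) = φ by field_simp, one_div_mul_eq_div, div_le_iff₀ hα₀] at this
    linarith
  have hamgm := mul_le_mul_of_nonneg_left (mul_rpow_sub_one_le hα hr) hsin
  have h₁' := mul_le_mul_of_nonneg_left h₁ (rpow_nonneg hr α)
  refine le_of_mul_le_mul_left ?_ hα₀
  linarith

theorem Complex.arg_mem_Ioo_iff {z : ℂ} : arg z ∈ Ioo 0 π ↔ 0 < z.im := by
  constructor
  · rintro ⟨h₀, hπ⟩
    have hz : z ≠ 0 := by rintro rfl; simp at h₀
    rw [← norm_mul_sin_arg]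
    exact mul_pos (norm_pos_iff.2 hz) (sin_pos_of_pos_of_lt_pi h₀ hπ)
  · intro h
    refine ⟨(arg_nonneg_iff.2 h.le).lt_of_ne ?_, arg_lt_pi_iff.2 (.inr h.ne')⟩
    exact fun h₀ ↦ h.ne' (arg_eq_zero_iff.1 h₀.symm).2

theorem Complex.arg_le_arg_iff_of_im_pos {a b : ℂ} (ha : 0 < a.im) (hb : 0 < b.im) :
    arg b ≤ arg a ↔ 0 ≤ (a * conj b).im := by
  obtain ⟨ha₀, haπ⟩ := arg_mem_Ioo_iff.2 ha
  obtain ⟨hb₀, hbπ⟩ := arg_mem_Ioo_iff.2 hb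
  have hb_ne : b ≠ 0 := by rintro rfl; simp at hb
  have hconj : arg (conj b) = -arg b := by rw [arg_conj, if_neg hbπ.ne]
  have harg : arg (a * conj b) = arg a - arg b := by
    rw [arg_mul (by rintro rfl; simp at ha) ((map_ne_zero _).2 hb_ne)
      (by rw [hconj]; constructor <;> linarith), hconj, sub_eq_add_neg]
  rw [← arg_nonneg_iff, harg, sub_nonneg]

theorem Complex.arg_cpow_ofReal (z : ℂ) {c : ℝ} (h₁ : -π < c * arg z) (h₂ : c * arg z ≤ π) :
    arg (z ^ (c : ℂ)) = c * arg z := by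
  rcases eq_or_ne z 0 with rfl | hz
  · by_cases hc : c = 0 <;> simp [hc]
  have him : (log z * c).im = c * arg z := by simp [log_im, mul_comm]
  rw [cpow_def_of_ne_zero hz, ← log_im, log_exp (him ▸ h₁) (him ▸ h₂), him]

theorem Complex.arg_cpow_ofReal_of_mem_Icc (z : ℂ) {c : ℝ} (hc : c ∈ Icc 0 1) :
    arg (z ^ (c : ℂ)) = c * arg z := by
  obtain ⟨hc₀, hc₁⟩ := hc
  obtain ⟨hz₀, hzπ⟩ := arg_mem_Ioc z
  apply arg_cpow_ofReal <;> rcases le_total 0 (arg z) with h | h <;> nlinarith [pi_pos]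

theorem Complex.im_cpow_ofReal_pos {z : ℂ} (hz : 0 < z.im) {c : ℝ} (hc : c ∈ Ioc 0 1) :
    0 < (z ^ (c : ℂ)).im := by
  obtain ⟨hz₀, hzπ⟩ := arg_mem_Ioo_iff.2 hz
  rw [← arg_mem_Ioo_iff, arg_cpow_ofReal_of_mem_Icc z (Ioc_subset_Icc_self hc)]
  exact ⟨mul_pos hc.1 hz₀, by nlinarith [hc.2]⟩

theorem Complex.arg_sub_one_le_arg_cpow_sub_one {α : ℝ} (hα : 1 ≤ α) {w : ℂ} (hw : 0 < w.im)
    (hαw : α * arg w < π) : arg (w - 1) ≤ arg (w ^ (α : ℂ) - 1) := by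
  obtain ⟨hφ, hφπ⟩ := arg_mem_Ioo_iff.2 hw
  set r := ‖w‖
  set φ := arg w
  have hr : 0 < r := norm_pos_iff.2 (by rintro rfl; simp at hw)
  have harg : arg (w ^ (α : ℂ)) = α * φ := arg_cpow_ofReal w (by nlinarith) hαw.le
  have hrpow : r ^ α = r ^ (α - 1) * r := by rw [← rpow_add_one hr.ne', sub_add_cancel]
  have hpow_re : (w ^ (α : ℂ)).re = r ^ (α - 1) * r * Real.cos (α * φ) := by
    rw [← norm_mul_cos_arg, norm_cpow_real, harg, hrpow]
  have hpow_im : (w ^ (α : ℂ)).im = r ^ (α - 1) * r * Real.sin (α * φ) := by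
    rw [← norm_mul_sin_arg, norm_cpow_real, harg, hrpow]
  have hpow : 0 < (w ^ (α : ℂ)).im := arg_mem_Ioo_iff.1 (harg ▸ ⟨by nlinarith, hαw⟩)
  rw [arg_le_arg_iff_of_im_pos (by simpa using hpow) (by simpa using hw)]
  have key := rpow_sub_one_mul_sin_le hα hr.le hφ.le hαw.le
  have hsin_sub : Real.sin ((α - 1) * φ) =
      Real.sin (α * φ) * Real.cos φ - Real.cos (α * φ) * Real.sin φ := by
    rw [← Real.sin_sub, sub_one_mul]
  calc 0 ≤ r * (r ^ α * Real.sin ((α - 1) * φ) + Real.sin φ - r ^ (α - 1) * Real.sin (α * φ)) :=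
        mul_nonneg hr.le (sub_nonneg.2 key)
    _ = ((w ^ (α : ℂ) - 1) * conj (w - 1)).im := by
        simp only [mul_im, sub_re, sub_im, conj_re, conj_im, one_re, one_im, hpow_re, hpow_im,
          ← norm_mul_cos_arg w, ← norm_mul_sin_arg w, hsin_sub, hrpow]
        ring

theorem UHP_union_posRay_subset_slitPlane : UHP ∪ posRay ⊆ Complex.slitPlane := by
  rintro z (hz | hz)
  · exact Complex.mem_slitPlane_iff.2 (.inr (ne_of_gt hz))
  · exact Complex.mem_slitPlane_iff.2 (.inl (zero_lt_one.trans_le hz.2))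

theorem isPal_cpow_ofReal {c : ℝ} (hc : c ∈ Ioc 0 1) : IsPal (fun z : ℂ ↦ z ^ (c : ℂ)) where
  holo z hz := (differentiableAt_id.cpow_const
    (UHP_union_posRay_subset_slitPlane (.inl hz))).differentiableWithinAt
  mapsUHP z hz := im_cpow_ofReal_pos hz hc
  cont z hz := (continuousAt_cpow_const (UHP_union_posRay_subset_slitPlane hz)).continuousWithinAt
  realOnRay z hz := by
    have hz_real : z = (z.re : ℂ) := Complex.ext rfl (by simp [hz.1])
    rw [hz_real, ← ofReal_cpow (zero_le_one.trans hz.2)]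
    exact ofReal_im _
  fix_one := one_cpow _

/-- for α ≥ 1, the principal root map r(z) = z^{1/α} maps the
upper half-plane into itself, takes rays from the origin onto rays
(Arg(z^{1/α}) = Arg(z)/α), satisfies Arg(z^{1/α} − 1) ≤ Arg(z − 1), and
belongs to the class P. -/
theorem root_map_is_pal (α : ℝ) (hα : 1 ≤ α) :
    (∀ z ∈ UHP,
      0 < (z ^ (((1 / α : ℝ)) : ℂ)).im ∧
      Complex.arg (z ^ (((1 / α : ℝ)) : ℂ)) = Complex.arg z / α ∧
      Complex.arg (z ^ (((1 / α : ℝ)) : ℂ) - 1) ≤ Complex.arg (z - 1)) ∧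
    IsPal (fun z : ℂ => z ^ (((1 / α : ℝ)) : ℂ)) := by
  have hα₀ : 0 < α := by linarith
  have hc : 1 / α ∈ Ioc 0 1 := ⟨by positivity, (div_le_one hα₀).2 hα⟩
  refine ⟨fun z hz ↦ ?_, isPal_cpow_ofReal hc⟩
  have harg : arg (z ^ ((1 / α : ℝ) : ℂ)) = arg z / α := by
    rw [arg_cpow_ofReal_of_mem_Icc z (Ioc_subset_Icc_self hc), one_div_mul_eq_div]
  have hroot : (z ^ ((1 / α : ℝ) : ℂ)) ^ (α : ℂ) = z := by
    have him : (log z * ((1 / α : ℝ) : ℂ)).im = arg (z ^ ((1 / α : ℝ) : ℂ)) := by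
      rw [mul_comm, im_ofReal_mul, log_im, harg, one_div_mul_eq_div]
    rw [← cpow_mul _ (him ▸ neg_pi_lt_arg _) (him ▸ arg_le_pi _), ← ofReal_mul,
      one_div_mul_cancel hα₀.ne', ofReal_one, cpow_one]
  refine ⟨im_cpow_ofReal_pos hz hc, harg, ?_⟩
  have := arg_sub_one_le_arg_cpow_sub_one hα (im_cpow_ofReal_pos hz hc)
    (by rw [harg, mul_div_cancel₀ _ hα₀.ne']; exact arg_lt_pi_iff.2 (.inr hz.ne'))
  rwa [hroot] at this
end
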